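/- arXiv:2411.00249 — 2 statements merged into one kernel-verified Lean document; each statement's English description precedes it below -/
import Mathlib

section
/- The signed Laplacian matrices of balanced signed graphs with the same underlying graph are isospectral: if A₁ and A₂ are balanced signed adjacency matrices on a finite vertex set V with |A₁ u v| = |A₂ u v| for all u, v, then the signed Laplacians L(A₁) and L(A₂) have equal characteristic polynomials (equivalently, the same multiset of eigenvalues). -/
open Matrix

/-- A signed adjacency matrix: symmetric, zero diagonal, entries in {-1, 0, 1}. -/
def IsSignedAdj {V : Type*} [Fintype V] (A : Matrix V V ℝ) : Prop :=
  A.IsSymm ∧ (∀ v, A v v = 0) ∧ ∀ u v, A u v = -1 ∨ A u v = 0 ∨ A u v = 1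

/-- The degree matrix `D(A)`, with `D(A) v v = ∑ u, |A v u|`. -/
def degMatrix {V : Type*} [Fintype V] [DecidableEq V] (A : Matrix V V ℝ) : Matrix V V ℝ :=
  Matrix.diagonal fun v => ∑ u, |A v u|

/-- The signed Laplacian `L(A) = D(A) - A`. -/
def signedLap {V : Type*} [Fintype V] [DecidableEq V] (A : Matrix V V ℝ) : Matrix V V ℝ :=
  degMatrix A - A

/-- `A` is balanced if some `σ : V → {−1, 1}` satisfies `A u v = σ u * σ v * |A u v|`. -/
def IsBalanced {V : Type*} [Fintype V] (A : Matrix V V ℝ) : Prop :=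
  ∃ σ : V → ℝ, (∀ v, σ v = 1 ∨ σ v = -1) ∧ ∀ u v, A u v = σ u * σ v * |A u v|

/-
A balanced signed graph is switching equivalent to its underlying unsigned graph: with the
switching signature `σ`, `A = diag σ · |A| · diag σ`, and since `diag σ` is an involution
commuting with the degree matrix, `L(A) = diag σ · L(|A|) · diag σ` is similar to `L(|A|)`.
Hence `L(A₁)` and `L(A₂)` are both similar to the Laplacian of the common underlying graph.
-/

theorem Matrix.charpoly_mul_mul_of_mul_self_eq_one {n R : Type*} [Fintype n] [DecidableEq n]
    [CommRing R] {S : Matrix n n R} (hS : S * S = 1) (M : Matrix n n R) :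
    (S * M * S).charpoly = M.charpoly := by
  rw [mul_assoc, charpoly_mul_comm, mul_assoc, hS, mul_one]

theorem Matrix.diagonal_mul_self_eq_one {n R : Type*} [Fintype n] [DecidableEq n] [Semiring R]
    {d : n → R} (hd : ∀ i, d i * d i = 1) : diagonal d * diagonal d = 1 := by
  rw [diagonal_mul_diagonal, ← diagonal_one]
  exact congrArg diagonal (funext hd)

section Switching

variable {V : Type*} [Fintype V] [DecidableEq V] {σ : V → ℝ}

theorem degMatrix_map_abs (A : Matrix V V ℝ) : degMatrix (A.map abs) = degMatrix A := by
  simp [degMatrix]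

theorem eq_diagonal_mul_map_abs_mul_diagonal {A : Matrix V V ℝ}
    (hA : ∀ u v, A u v = σ u * σ v * |A u v|) :
    A = diagonal σ * A.map abs * diagonal σ := by
  ext u v
  rw [mul_diagonal, diagonal_mul, map_apply]
  conv_lhs => rw [hA u v]
  ring

theorem signedLap_eq_diagonal_mul_signedLap_map_abs_mul_diagonal {A : Matrix V V ℝ}
    (hσ : ∀ v, σ v * σ v = 1) (hA : ∀ u v, A u v = σ u * σ v * |A u v|) :
    signedLap A = diagonal σ * signedLap (A.map abs) * diagonal σ := by
  have hdeg : diagonal σ * degMatrix A * diagonal σ = degMatrix A := by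
    rw [degMatrix, diagonal_mul_diagonal, diagonal_mul_diagonal]
    congr 1
    funext v
    rw [mul_right_comm, hσ, one_mul]
  rw [signedLap, signedLap, degMatrix_map_abs, mul_sub, sub_mul, hdeg,
    ← eq_diagonal_mul_map_abs_mul_diagonal hA]

theorem IsBalanced.charpoly_signedLap {A : Matrix V V ℝ} (hA : IsBalanced A) :
    (signedLap A).charpoly = (signedLap (A.map abs)).charpoly := by
  obtain ⟨σ, hσ, hAσ⟩ := hA
  have hσσ : ∀ v, σ v * σ v = 1 := fun v => by rcases hσ v with h | h <;> rw [h] <;> norm_num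
  rw [signedLap_eq_diagonal_mul_signedLap_map_abs_mul_diagonal hσσ hAσ,
    charpoly_mul_mul_of_mul_self_eq_one (diagonal_mul_self_eq_one hσσ)]

end Switching

theorem balanced_isospectral_general {V : Type*} [Fintype V] [DecidableEq V]
    (A₁ A₂ : Matrix V V ℝ)
    (hbal₁ : IsBalanced A₁) (hbal₂ : IsBalanced A₂)
    (hsame : ∀ u v, |A₁ u v| = |A₂ u v|) :
    (signedLap A₁).charpoly = (signedLap A₂).charpoly := by
  have habs : A₁.map abs = A₂.map abs := Matrix.ext hsame
  rw [hbal₁.charpoly_signedLap, hbal₂.charpoly_signedLap, habs]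

/-- Signed Laplacians of balanced signed graphs with the same underlying graph are
isospectral: their characteristic polynomials coincide. -/
theorem balanced_isospectral {V : Type*} [Fintype V] [DecidableEq V]
    (A₁ A₂ : Matrix V V ℝ) (hA₁ : IsSignedAdj A₁) (hA₂ : IsSignedAdj A₂)
    (hbal₁ : IsBalanced A₁) (hbal₂ : IsBalanced A₂)
    (hsame : ∀ u v, |A₁ u v| = |A₂ u v|) :
    (signedLap A₁).charpoly = (signedLap A₂).charpoly :=
  balanced_isospectral_general A₁ A₂ hbal₁ hbal₂ hsame
end

section
/- For a connected balanced signed graph, the kernel of the signed Laplacian is one-dimensional and is spanned by a vector all of whose entries are +1 or −1, and this vector encodes the Harary cut: let A be a balanced signed adjacency matrix on a finite nonempty vertex set V whose underlying graph (u adjacent to v iff A u v ≠ 0) is connected, with balance witness σ : V → {−1, 1}. Then L(A) · σ = 0, and every vector x with L(A) · x = 0 is a scalar multiple of σ; consequently every 0-eigenvector of L(A) has all entries equal to +c or −c for some c ≠ 0, and partitioning V by the sign of the entries puts all positive edges within the parts and all negative edges between the parts. -/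
open Matrix

/-- The underlying simple graph of `A`: `u` adjacent to `v` iff `A u v ≠ 0`. -/
def underlying {V : Type*} (A : Matrix V V ℝ) : SimpleGraph V :=
  SimpleGraph.fromRel fun u v => A u v ≠ 0

/-!
Switching by a balance witness `σ` turns the signed Laplacian into the ordinary Laplacian of the
underlying graph: `L(A) = diag σ · L(G) · diag σ`, because `A u v = σ u σ v |A u v|` and
`σ u ^ 2 = 1`. So `x` lies in the kernel of `L(A)` exactly when `σ * x` lies in the kernel of
`L(G)`, which for a connected graph consists of the constant vectors; hence the kernel of `L(A)`
is spanned by `σ`. On an edge `|A u v| = 1`, so `A u v = σ u σ v`, which is the Harary cut.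
-/

lemma mul_mul_eq_of_mul_self_eq_one {M : Type*} [Monoid M] {s : M} (h : s * s = 1) (x : M) :
    s * (s * x) = x := by
  rw [← mul_assoc, h, one_mul]

section

variable {V : Type*} [Fintype V] {A : Matrix V V ℝ} {σ : V → ℝ}

namespace IsSignedAdj

lemma abs_apply_of_ne_zero (hA : IsSignedAdj A) {u v : V} (h : A u v ≠ 0) : |A u v| = 1 := by
  rcases hA.2.2 u v with h' | h' | h' <;> simp_all

lemma apply_eq_mul_of_ne_zero (hA : IsSignedAdj A) (hbal : ∀ u v, A u v = σ u * σ v * |A u v|)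
    {u v : V} (h : A u v ≠ 0) : A u v = σ u * σ v := by
  rw [hbal u v, hA.abs_apply_of_ne_zero h, mul_one]

lemma adjMatrix_underlying (hA : IsSignedAdj A) [DecidableRel (underlying A).Adj] :
    (underlying A).adjMatrix ℝ = A.map abs := by
  ext u v
  rw [SimpleGraph.adjMatrix_apply, map_apply]
  by_cases h : A u v = 0
  · have hvu : A v u = 0 := by rw [hA.1.apply u v, h]
    have hnadj : ¬(underlying A).Adj u v := by simp [underlying, h, hvu]
    simp [hnadj, h]
  · have huv : u ≠ v := by rintro rfl; exact h (hA.2.1 u)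
    have hadj : (underlying A).Adj u v := by simp [underlying, h, huv]
    simp [hadj, hA.abs_apply_of_ne_zero h]

end IsSignedAdj

variable [DecidableEq V]

lemma IsSignedAdj.lapMatrix_underlying (hA : IsSignedAdj A) [DecidableRel (underlying A).Adj] :
    (underlying A).lapMatrix ℝ = signedLap (A.map abs) := by
  have hdeg : ∀ v, ((underlying A).degree v : ℝ) = ∑ u, |A v u| := fun v => by
    rw [SimpleGraph.degree_eq_sum_if_adj]
    refine Finset.sum_congr rfl fun u _ => ?_
    simpa using congrFun (congrFun hA.adjMatrix_underlying v) u
  simp only [SimpleGraph.lapMatrix, SimpleGraph.degMatrix, signedLap, degMatrix, hdeg,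
    hA.adjMatrix_underlying, map_apply, abs_abs]

lemma signedLap_eq_diagonal_mul_mul_diagonal (hσ : σ * σ = 1)
    (hbal : ∀ u v, A u v = σ u * σ v * |A u v|) :
    signedLap A = diagonal σ * signedLap (A.map abs) * diagonal σ := by
  have hσv : ∀ v, σ v * σ v = 1 := congrFun hσ
  ext u v
  simp only [signedLap, degMatrix, diagonal_mul, mul_diagonal, Matrix.sub_apply, map_apply, abs_abs]
  by_cases huv : u = v
  · subst huv
    simp only [diagonal_apply_eq]
    linear_combination -(hbal u u) - (∑ w, |A u w|) * hσv u
  · simp only [diagonal_apply_ne _ huv]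
    linear_combination -(hbal u v)

lemma signedLap_mulVec_eq_zero_iff (hA : IsSignedAdj A) [DecidableRel (underlying A).Adj]
    (hσ : σ * σ = 1) (hbal : ∀ u v, A u v = σ u * σ v * |A u v|) {x : V → ℝ} :
    signedLap A *ᵥ x = 0 ↔ (underlying A).lapMatrix ℝ *ᵥ (σ * x) = 0 := by
  have hdiag : ∀ y, diagonal σ *ᵥ y = σ * y := fun y => funext (mulVec_diagonal σ y)
  rw [signedLap_eq_diagonal_mul_mul_diagonal hσ hbal, ← hA.lapMatrix_underlying,
    ← mulVec_mulVec, ← mulVec_mulVec, hdiag, hdiag]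
  constructor
  · intro h
    rw [← mul_mul_eq_of_mul_self_eq_one hσ (_ *ᵥ _), h, mul_zero]
  · intro h
    rw [h, mul_zero]

lemma SimpleGraph.Connected.lapMatrix_mulVec_eq_zero_iff {G : SimpleGraph V} [DecidableRel G.Adj]
    (hG : G.Connected) {y : V → ℝ} :
    G.lapMatrix ℝ *ᵥ y = 0 ↔ ∃ c, y = Function.const V c := by
  constructor
  · intro h
    obtain ⟨v₀⟩ := hG.nonempty
    exact ⟨y v₀, funext fun v =>
      (G.lapMatrix_mulVec_eq_zero_iff_forall_reachable.mp h) v v₀ (hG v v₀)⟩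
  · rintro ⟨c, rfl⟩
    exact G.lapMatrix_mulVec_eq_zero_iff_forall_reachable.mpr fun _ _ _ => rfl

lemma signedLap_mulVec_eq_zero_iff_exists_smul (hA : IsSignedAdj A)
    (hconn : (underlying A).Connected) (hσ : σ * σ = 1)
    (hbal : ∀ u v, A u v = σ u * σ v * |A u v|) {x : V → ℝ} :
    signedLap A *ᵥ x = 0 ↔ ∃ c : ℝ, x = c • σ := by
  classical
  rw [signedLap_mulVec_eq_zero_iff hA hσ hbal, hconn.lapMatrix_mulVec_eq_zero_iff]
  refine exists_congr fun c => ⟨fun h => ?_, fun h => ?_⟩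
  · rw [← mul_mul_eq_of_mul_self_eq_one hσ x, h]
    ext v
    simp [mul_comm]
  · rw [h, mul_smul_comm, hσ]
    ext v
    simp

end

theorem balanced_connected_kernel_general {V : Type*} [Fintype V] [DecidableEq V]
    (A : Matrix V V ℝ) (hA : IsSignedAdj A)
    (hconn : (underlying A).Connected)
    (σ : V → ℝ) (hσ : ∀ v, σ v = 1 ∨ σ v = -1)
    (hbal : ∀ u v, A u v = σ u * σ v * |A u v|) :
    signedLap A *ᵥ σ = 0 ∧
    (∀ x : V → ℝ, signedLap A *ᵥ x = 0 → ∃ c : ℝ, x = c • σ) ∧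
    (∀ x : V → ℝ, x ≠ 0 → signedLap A *ᵥ x = 0 →
      ∃ c : ℝ, c ≠ 0 ∧ ∀ v, x v = c ∨ x v = -c) ∧
    (∀ u v, A u v ≠ 0 → ((σ u = σ v → A u v = 1) ∧ (σ u ≠ σ v → A u v = -1))) := by
  have hσσ : σ * σ = 1 := funext fun v => mul_self_eq_one_iff.mpr (hσ v)
  have hker : ∀ x, signedLap A *ᵥ x = 0 ↔ ∃ c : ℝ, x = c • σ := fun _ =>
    signedLap_mulVec_eq_zero_iff_exists_smul hA hconn hσσ hbal
  refine ⟨(hker σ).mpr ⟨1, (one_smul ℝ σ).symm⟩, fun x => (hker x).mp, ?_, ?_⟩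
  · intro x hx₀ hx
    obtain ⟨c, rfl⟩ := (hker x).mp hx
    refine ⟨c, fun hc => hx₀ (by simp [hc]), fun v => ?_⟩
    rcases hσ v with h | h <;> simp [h]
  · intro u v huv
    rw [hA.apply_eq_mul_of_ne_zero hbal huv]
    rcases hσ u with hu | hu <;> rcases hσ v with hv | hv <;> norm_num [hu, hv]

/-- For a connected balanced signed graph with balance witness `σ : V → {−1, 1}`:
`L(A) σ = 0`; every kernel vector is a scalar multiple of `σ`; consequently every
nonzero `0`-eigenvector has all entries `+c` or `−c` for some `c ≠ 0`; and partitioning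
the vertices by the sign of `σ` puts all positive edges within the parts
and all negative edges between the parts (the Harary cut). -/
theorem balanced_connected_kernel {V : Type*} [Fintype V] [DecidableEq V] [Nonempty V]
    (A : Matrix V V ℝ) (hA : IsSignedAdj A)
    (hconn : (underlying A).Connected)
    (σ : V → ℝ) (hσ : ∀ v, σ v = 1 ∨ σ v = -1)
    (hbal : ∀ u v, A u v = σ u * σ v * |A u v|) :
    signedLap A *ᵥ σ = 0 ∧
    (∀ x : V → ℝ, signedLap A *ᵥ x = 0 → ∃ c : ℝ, x = c • σ) ∧
    (∀ x : V → ℝ, x ≠ 0 → signedLap A *ᵥ x = 0 →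
      ∃ c : ℝ, c ≠ 0 ∧ ∀ v, x v = c ∨ x v = -c) ∧
    (∀ u v, A u v ≠ 0 → ((σ u = σ v → A u v = 1) ∧ (σ u ≠ σ v → A u v = -1))) :=
  balanced_connected_kernel_general A hA hconn σ hσ hbal
end
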